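/- The point (26, 3120) on the elliptic curve E' : y² + y = x³ + x² − 64490x + 11396008 over ℚ has infinite order. -/

import Mathlib

/-!
Write `|·|` for the 2-adic norm. On a Weierstrass curve with `|a₁| ≤ 1/2` and `a₂, a₃, a₄`
2-integral, doubling a point with `|x| = t²`, `|y| = t³`, `t ≥ 2` gives a point with
`|x| = (2t)²`, `|y| = (2t)³`, because the tangent slope has norm `2t`. So the points `2ᵏQ` of
such a point `Q` are pairwise distinct and `Q` has infinite order. For `P = (26, 3120)` the point
`Q = 5P` qualifies with `t = 2⁴`; the reduction of the curve mod 2 has 5 points, so no smaller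
multiple of `P` lies in its kernel.
-/

open WeierstrassCurve.Affine WeierstrassCurve.Affine.Point

theorem padicNorm_add_eq_left_of_lt {p : ℕ} [Fact p.Prime] {q r : ℚ}
    (h : padicNorm p r < padicNorm p q) : padicNorm p (q + r) = padicNorm p q := by
  rw [padicNorm.add_eq_max_of_ne h.ne', max_eq_left h.le]

theorem padicNorm_add_lt {p : ℕ} [Fact p.Prime] {q r c : ℚ} (hq : padicNorm p q < c)
    (hr : padicNorm p r < c) : padicNorm p (q + r) < c :=
  padicNorm.nonarchimedean.trans_lt (max_lt hq hr)

theorem padicNorm_two_two : padicNorm 2 2 = 2⁻¹ := by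
  exact_mod_cast padicNorm.padicNorm_p_of_prime (p := 2)

theorem padicNorm_two_three : padicNorm 2 3 = 1 := by
  exact_mod_cast (padicNorm.nat_eq_one_iff (p := 2) 3).2 (by decide)

theorem padicNorm_two_intCast_div_two_pow_mul {a b : ℤ} (ha : ¬ 2 ∣ a) (hb : ¬ 2 ∣ b) (k : ℕ) :
    padicNorm 2 (a / (2 ^ k * b)) = 2 ^ k := by
  rw [padicNorm.div, padicNorm.mul, IsAbsoluteValue.abv_pow (padicNorm 2), padicNorm_two_two,
    (padicNorm.int_eq_one_iff a).2 ha, (padicNorm.int_eq_one_iff b).2 hb]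
  simp

namespace WeierstrassCurve.Affine

section Field

variable {F : Type*} [Field F] [DecidableEq F] {W : WeierstrassCurve.Affine F}

theorem exists_some_add_some_eq_of_X_ne {x₁ y₁ x₂ y₂ x₃ y₃ : F} (h₁ : W.Nonsingular x₁ y₁)
    (h₂ : W.Nonsingular x₂ y₂) (hx : x₁ ≠ x₂)
    (hx₃ : W.addX x₁ x₂ (W.slope x₁ x₂ y₁ y₂) = x₃)
    (hy₃ : W.addY x₁ x₂ y₁ (W.slope x₁ x₂ y₁ y₂) = y₃) :
    ∃ h₃ : W.Nonsingular x₃ y₃, some _ _ h₁ + some _ _ h₂ = some _ _ h₃ := by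
  subst hx₃ hy₃
  exact ⟨_, add_of_X_ne hx⟩

theorem exists_two_nsmul_some_eq_of_Y_ne {x₁ y₁ x₃ y₃ : F} (h₁ : W.Nonsingular x₁ y₁)
    (hy : y₁ ≠ W.negY x₁ y₁)
    (hx₃ : W.addX x₁ x₁ (W.slope x₁ x₁ y₁ y₁) = x₃)
    (hy₃ : W.addY x₁ x₁ y₁ (W.slope x₁ x₁ y₁ y₁) = y₃) :
    ∃ h₃ : W.Nonsingular x₃ y₃, 2 • some _ _ h₁ = some _ _ h₃ := by
  subst hx₃ hy₃
  exact ⟨_, (two_nsmul _).trans (add_self_of_Y_ne hy)⟩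

end Field

variable {W : WeierstrassCurve.Affine ℚ} {x y t : ℚ}

theorem padicNorm_sub_negY (ha₁ : padicNorm 2 W.a₁ ≤ 2⁻¹) (ha₃ : padicNorm 2 W.a₃ ≤ 1)
    (ht : 2 ≤ t) (hx : padicNorm 2 x = t ^ 2) (hy : padicNorm 2 y = t ^ 3) :
    padicNorm 2 (y - W.negY x y) = t ^ 3 / 2 := by
  have h2y : padicNorm 2 (2 * y) = t ^ 3 / 2 := by
    rw [padicNorm.mul, padicNorm_two_two, hy]; ring
  have ha₁x : padicNorm 2 (W.a₁ * x) < t ^ 3 / 2 := by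
    rw [padicNorm.mul, hx]; nlinarith
  rw [show y - W.negY x y = 2 * y + (W.a₁ * x + W.a₃) by rw [negY]; ring,
    padicNorm_add_eq_left_of_lt, h2y]
  exact h2y ▸ padicNorm_add_lt ha₁x (by nlinarith)

theorem ne_negY_of_padicNorm (ha₁ : padicNorm 2 W.a₁ ≤ 2⁻¹) (ha₃ : padicNorm 2 W.a₃ ≤ 1)
    (ht : 2 ≤ t) (hx : padicNorm 2 x = t ^ 2) (hy : padicNorm 2 y = t ^ 3) :
    y ≠ W.negY x y := fun hY ↦ by
  have hden := padicNorm_sub_negY ha₁ ha₃ ht hx hy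
  rw [sub_eq_zero.2 hY, padicNorm.zero] at hden
  nlinarith

theorem padicNorm_slope_self (ha₁ : padicNorm 2 W.a₁ ≤ 2⁻¹) (ha₂ : padicNorm 2 W.a₂ ≤ 1)
    (ha₃ : padicNorm 2 W.a₃ ≤ 1) (ha₄ : padicNorm 2 W.a₄ ≤ 1)
    (ht : 2 ≤ t) (hx : padicNorm 2 x = t ^ 2) (hy : padicNorm 2 y = t ^ 3) :
    padicNorm 2 (W.slope x x y y) = 2 * t := by
  have h3x : padicNorm 2 (3 * x ^ 2) = t ^ 4 := by
    rw [padicNorm.mul, padicNorm_two_three, IsAbsoluteValue.abv_pow (padicNorm 2), hx]; ring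
  have h2a₂x : padicNorm 2 (2 * W.a₂ * x) < t ^ 4 := by
    rw [padicNorm.mul, padicNorm.mul, padicNorm_two_two, hx]
    nlinarith [mul_le_mul_of_nonneg_right ha₂ (sq_nonneg t),
      mul_le_mul_of_nonneg_right ht (sq_nonneg t)]
  have ha₁y : padicNorm 2 (-(W.a₁ * y)) < t ^ 4 := by
    rw [padicNorm.neg, padicNorm.mul, hy]
    have ht₃ : 0 < t ^ 3 := by positivity
    nlinarith [mul_le_mul_of_nonneg_right ha₁ ht₃.le, mul_le_mul_of_nonneg_left ht ht₃.le]
  have hnum : padicNorm 2 (3 * x ^ 2 + 2 * W.a₂ * x + W.a₄ - W.a₁ * y) = t ^ 4 := by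
    rw [show 3 * x ^ 2 + 2 * W.a₂ * x + W.a₄ - W.a₁ * y =
      3 * x ^ 2 + (2 * W.a₂ * x + (W.a₄ + -(W.a₁ * y))) by ring, padicNorm_add_eq_left_of_lt,
      h3x]
    have ha₄' : padicNorm 2 W.a₄ < t ^ 4 := by nlinarith [pow_le_pow_left₀ (by norm_num) ht 4]
    exact h3x ▸ padicNorm_add_lt h2a₂x (padicNorm_add_lt ha₄' ha₁y)
  rw [slope_of_Y_ne rfl (ne_negY_of_padicNorm ha₁ ha₃ ht hx hy), padicNorm.div, hnum,
    padicNorm_sub_negY ha₁ ha₃ ht hx hy]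
  field_simp

theorem padicNorm_addX_self (ha₁ : padicNorm 2 W.a₁ ≤ 2⁻¹) (ha₂ : padicNorm 2 W.a₂ ≤ 1)
    {ℓ : ℚ} (ht : 2 ≤ t) (hx : padicNorm 2 x = t ^ 2) (hℓ : padicNorm 2 ℓ = 2 * t) :
    padicNorm 2 (W.addX x x ℓ) = (2 * t) ^ 2 := by
  have hℓ2 : padicNorm 2 (ℓ ^ 2) = (2 * t) ^ 2 := by
    rw [IsAbsoluteValue.abv_pow (padicNorm 2), hℓ]
  have ha₁ℓ : padicNorm 2 (W.a₁ * ℓ) < (2 * t) ^ 2 := by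
    rw [padicNorm.mul, hℓ]; nlinarith
  have h2x : padicNorm 2 (-(2 * x)) < (2 * t) ^ 2 := by
    rw [padicNorm.neg, padicNorm.mul, padicNorm_two_two, hx]; nlinarith
  rw [addX, show ℓ ^ 2 + W.a₁ * ℓ - W.a₂ - x - x = ℓ ^ 2 + (W.a₁ * ℓ + (-W.a₂ + -(2 * x))) by
    ring, padicNorm_add_eq_left_of_lt, hℓ2]
  refine hℓ2 ▸ padicNorm_add_lt ha₁ℓ (padicNorm_add_lt ?_ h2x)
  rw [padicNorm.neg]; nlinarith

theorem padicNorm_addY_self (ha₁ : padicNorm 2 W.a₁ ≤ 2⁻¹) (ha₃ : padicNorm 2 W.a₃ ≤ 1)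
    {ℓ : ℚ} (ht : 2 ≤ t) (hx : padicNorm 2 x = t ^ 2) (hy : padicNorm 2 y = t ^ 3)
    (hℓ : padicNorm 2 ℓ = 2 * t) (hx' : padicNorm 2 (W.addX x x ℓ) = (2 * t) ^ 2) :
    padicNorm 2 (W.addY x x y ℓ) = (2 * t) ^ 3 := by
  rw [addY, negAddY, negY]
  generalize W.addX x x ℓ = x' at hx' ⊢
  have hsub : padicNorm 2 (x' + -x) = (2 * t) ^ 2 := by
    rw [padicNorm_add_eq_left_of_lt, hx']
    rw [padicNorm.neg, hx, hx']
    nlinarith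
  have hmain : padicNorm 2 (-(ℓ * (x' + -x))) = (2 * t) ^ 3 := by
    rw [padicNorm.neg, padicNorm.mul, hℓ, hsub]; ring
  have ha₁x' : padicNorm 2 (-(W.a₁ * x')) < (2 * t) ^ 3 := by
    rw [padicNorm.neg, padicNorm.mul, hx']; nlinarith
  rw [show -(ℓ * (x' - x) + y) - W.a₁ * x' - W.a₃ =
    -(ℓ * (x' + -x)) + (-y + (-(W.a₁ * x') + -W.a₃)) by ring, padicNorm_add_eq_left_of_lt, hmain]
  refine hmain ▸ padicNorm_add_lt ?_ (padicNorm_add_lt ha₁x' ?_)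
  · rw [padicNorm.neg, hy]; nlinarith
  · rw [padicNorm.neg]; nlinarith

theorem exists_two_nsmul_some_padicNorm (ha₁ : padicNorm 2 W.a₁ ≤ 2⁻¹)
    (ha₂ : padicNorm 2 W.a₂ ≤ 1) (ha₃ : padicNorm 2 W.a₃ ≤ 1) (ha₄ : padicNorm 2 W.a₄ ≤ 1)
    (h : W.Nonsingular x y) (ht : 2 ≤ t) (hx : padicNorm 2 x = t ^ 2)
    (hy : padicNorm 2 y = t ^ 3) :
    ∃ (x' y' : ℚ) (h' : W.Nonsingular x' y'), 2 • some _ _ h = some _ _ h' ∧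
      padicNorm 2 x' = (2 * t) ^ 2 ∧ padicNorm 2 y' = (2 * t) ^ 3 := by
  have hY := ne_negY_of_padicNorm ha₁ ha₃ ht hx hy
  have hℓ := padicNorm_slope_self ha₁ ha₂ ha₃ ha₄ ht hx hy
  have hx' := padicNorm_addX_self ha₁ ha₂ ht hx hℓ
  obtain ⟨h', h2⟩ := exists_two_nsmul_some_eq_of_Y_ne h hY rfl rfl
  exact ⟨_, _, h', h2, hx', padicNorm_addY_self ha₁ ha₃ ht hx hy hℓ hx'⟩

theorem exists_two_pow_nsmul_some_padicNorm (ha₁ : padicNorm 2 W.a₁ ≤ 2⁻¹)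
    (ha₂ : padicNorm 2 W.a₂ ≤ 1) (ha₃ : padicNorm 2 W.a₃ ≤ 1) (ha₄ : padicNorm 2 W.a₄ ≤ 1)
    (h : W.Nonsingular x y) (ht : 2 ≤ t) (hx : padicNorm 2 x = t ^ 2)
    (hy : padicNorm 2 y = t ^ 3) (k : ℕ) :
    ∃ (x' y' : ℚ) (h' : W.Nonsingular x' y'), 2 ^ k • some _ _ h = some _ _ h' ∧
      padicNorm 2 x' = (2 ^ k * t) ^ 2 ∧ padicNorm 2 y' = (2 ^ k * t) ^ 3 := by
  induction k with
  | zero => exact ⟨x, y, h, one_nsmul _, by simpa using hx, by simpa using hy⟩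
  | succ k ih =>
    obtain ⟨x', y', h', hk, hx', hy'⟩ := ih
    have ht' : 2 ≤ 2 ^ k * t := by nlinarith [one_le_pow₀ (one_le_two : (1 : ℚ) ≤ 2) (n := k)]
    obtain ⟨x'', y'', h'', h2, hx'', hy''⟩ :=
      exists_two_nsmul_some_padicNorm ha₁ ha₂ ha₃ ha₄ h' ht' hx' hy'
    refine ⟨x'', y'', h'', ?_, by rw [hx'', pow_succ']; ring, by rw [hy'', pow_succ']; ring⟩
    rw [pow_succ, mul_nsmul, hk, h2]

theorem not_isOfFinAddOrder_some_of_padicNorm (ha₁ : padicNorm 2 W.a₁ ≤ 2⁻¹)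
    (ha₂ : padicNorm 2 W.a₂ ≤ 1) (ha₃ : padicNorm 2 W.a₃ ≤ 1) (ha₄ : padicNorm 2 W.a₄ ≤ 1)
    (h : W.Nonsingular x y) (ht : 2 ≤ t) (hx : padicNorm 2 x = t ^ 2)
    (hy : padicNorm 2 y = t ^ 3) : ¬ IsOfFinAddOrder (some _ _ h) := by
  choose x' y' h' hk hx' _ using exists_two_pow_nsmul_some_padicNorm ha₁ ha₂ ha₃ ha₄ h ht hx hy
  have hinj : Function.Injective fun k : ℕ ↦ (2 ^ k) • some _ _ h := fun i j hij ↦ by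
    simp only [hk, some.injEq] at hij
    have ht₀ : 0 < t := by linarith
    have hsq := hx' i
    rw [hij.1, hx' j, pow_left_inj₀ (by positivity) (by positivity) two_ne_zero] at hsq
    exact pow_right_injective₀ two_pos one_lt_two.ne' (mul_right_cancel₀ ht₀.ne' hsq).symm
  exact fun hfin ↦ Set.infinite_of_injective_forall_mem hinj
    (fun k ↦ (⟨2 ^ k, rfl⟩ : _ ∈ AddSubmonoid.multiples (some _ _ h))) hfin.finite_multiples

end WeierstrassCurve.Affine

/-- the point `(26, 3120)` on the elliptic curve
`E' : y² + y = x³ + x² − 64490x + 11396008` (the quadratic twist of 11a1 by −79) has infinite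
order in `E'(ℚ)`. -/
theorem stmt12
    (h : (⟨0, 1, 1, -64490, 11396008⟩ :
        WeierstrassCurve ℚ).toAffine.Nonsingular 26 3120) :
    ¬ IsOfFinAddOrder (WeierstrassCurve.Affine.Point.some _ _ h) := by
  obtain ⟨h₂, h2P⟩ := exists_two_nsmul_some_eq_of_Y_ne (x₃ := 47) (y₃ := -2911) h
    (by norm_num) (by norm_num [slope_of_Y_ne]) (by norm_num [slope_of_Y_ne, addY])
  obtain ⟨h₄, h4P⟩ := exists_two_nsmul_some_eq_of_Y_ne
    (x₃ := 118273466 / 33884041) (y₃ := 659132974619019 / 197239002661) h₂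
    (by norm_num) (by norm_num [slope_of_Y_ne]) (by norm_num [slope_of_Y_ne, addY])
  obtain ⟨h₅, h5P⟩ := exists_some_add_some_eq_of_X_ne
    (x₃ := 87855731575400921 / 1319113344160000)
    (y₃ := -130358600567835370964490781 / 47909669014553536000000) h₄ h
    (by norm_num) (by norm_num [slope_of_X_ne]) (by norm_num [slope_of_X_ne, addY])
  have h5 : 5 • some _ _ h = some _ _ h₅ := by
    rw [← h5P, ← h4P, ← h2P, ← mul_nsmul, ← succ_nsmul]
  intro hP
  refine not_isOfFinAddOrder_some_of_padicNorm (t := 16) (by simp) (by simp) (by simp) ?_ h₅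
    (by norm_num) ?_ ?_ (h5 ▸ hP.nsmul)
  · exact_mod_cast padicNorm.of_int (p := 2) (-64490)
  · rw [show (87855731575400921 / 1319113344160000 : ℚ) =
      ((87855731575400921 : ℤ) : ℚ) / (2 ^ 8 * ((5152786500625 : ℤ) : ℚ)) by norm_num,
      padicNorm_two_intCast_div_two_pow_mul (by decide) (by decide)]
    norm_num
  · rw [show (-130358600567835370964490781 / 47909669014553536000000 : ℚ) =
      ((-130358600567835370964490781 : ℤ) : ℚ) / (2 ^ 12 * ((11696696536756234375 : ℤ) : ℚ)) by
      norm_num, padicNorm_two_intCast_div_two_pow_mul (by decide) (by decide)]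
    norm_num
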